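/- arXiv:2303.00231 — 4 statements merged into one kernel-verified Lean document; each statement's English description precedes it below -/
import Mathlib

section
/- Let f: 2^N → ℤ≥0 be monotone submodular with f(∅)=0, x ∈ P(f), d ∈ ℝ^N_+ with f_{x,d} the rank function of the remnant supply polytope. For i ∈ N, the supremum of w_i ≥ 0 such that P^i_{x,d}(w_i) = P^i_{x,d}(0) equals f_{x,d}(N) − f_{x,d}(N∖{i}). -/
open Finset

noncomputable def fxd2 {N : Type*} [DecidableEq N] [Fintype N]
    (f : Finset N → ℤ) (x d : N → ℝ) (S : Finset N) : ℝ :=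
  S.powerset.inf' (S.powerset_nonempty) fun S' =>
    ((univ.powerset.filter fun S'' => S' ⊆ S'').inf' ⟨S', by simp⟩ fun S'' =>
      (f S'' : ℝ) - ∑ i ∈ S'', x i)
    + ∑ i ∈ S \ S', d i

def Pslice {N : Type*} [DecidableEq N] [Fintype N]
    (f : Finset N → ℤ) (x d : N → ℝ) (i : N) (w : ℝ) : Set (N → ℝ) :=
  {y : N → ℝ | ∃ u : N → ℝ, (∀ j, 0 ≤ u j) ∧ (∀ j, u j ≤ d j) ∧
      (∀ S : Finset N, ∑ j ∈ S, (x j + u j) ≤ (f S : ℝ)) ∧ u i = w ∧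
      y = fun j => if j = i then 0 else u j}

section aux

variable {N : Type*} [DecidableEq N] [Fintype N]

/-- `min_{S'' ⊇ S'} f(S'') - x(S'')`. -/
noncomputable def ghat (f : Finset N → ℤ) (x : N → ℝ) (S' : Finset N) : ℝ :=
  (univ.powerset.filter fun S'' => S' ⊆ S'').inf' ⟨S', by simp⟩ fun S'' =>
    (f S'' : ℝ) - ∑ i ∈ S'', x i

variable (f : Finset N → ℤ) (x d : N → ℝ)

lemma fxd2_def (S : Finset N) : fxd2 f x d S =
    S.powerset.inf' S.powerset_nonempty
      (fun S' => ghat f x S' + ∑ i ∈ S \ S', d i) := rfl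

lemma ghat_le {S' S'' : Finset N} (h : S' ⊆ S'') :
    ghat f x S' ≤ (f S'' : ℝ) - ∑ i ∈ S'', x i :=
  Finset.inf'_le _ (by simp [Finset.mem_filter, h])

lemma le_ghat {S' : Finset N} {c : ℝ}
    (h : ∀ S'', S' ⊆ S'' → c ≤ (f S'' : ℝ) - ∑ i ∈ S'', x i) :
    c ≤ ghat f x S' :=
  Finset.le_inf' _ _ (by
    intro S'' hS''
    exact h S'' (by simpa using (Finset.mem_filter.1 hS'').2))

lemma ghat_nonneg (hxP : ∀ S : Finset N, ∑ i ∈ S, x i ≤ (f S : ℝ)) (S' : Finset N) :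
    0 ≤ ghat f x S' :=
  le_ghat f x fun S'' _ => by linarith [hxP S'']

lemma ghat_mono {A B : Finset N} (h : A ⊆ B) : ghat f x A ≤ ghat f x B :=
  le_ghat f x fun S'' hS'' => ghat_le f x (h.trans hS'')

lemma ghat_empty (hf0 : f ∅ = 0)
    (hxP : ∀ S : Finset N, ∑ i ∈ S, x i ≤ (f S : ℝ)) : ghat f x ∅ = 0 := by
  refine le_antisymm ?_ (ghat_nonneg f x hxP ∅)
  have := ghat_le f x (Finset.empty_subset (∅ : Finset N))
  simpa [hf0] using this

lemma fsub_aux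
    (hmono : ∀ S T : Finset N, S ⊆ T → f S ≤ f T)
    (hsub : ∀ (S T : Finset N) (e : N), S ⊆ T → e ∉ T →
      f (insert e T) - f T ≤ f (insert e S) - f S)
    (W : Finset N) : ∀ S T : Finset N, S ⊆ T →
      f (T ∪ W) - f T ≤ f (S ∪ W) - f S := by
  induction W using Finset.induction_on with
  | empty => intro S T h; simp
  | @insert a W ha ih =>
    intro S T h
    have h1 : f (T ∪ W) - f T ≤ f (S ∪ W) - f S := ih S T h
    have h2 : f (insert a (T ∪ W)) - f (T ∪ W) ≤ f (insert a (S ∪ W)) - f (S ∪ W) := by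
      by_cases haT : a ∈ T ∪ W
      · have : insert a (T ∪ W) = T ∪ W := Finset.insert_eq_self.2 haT
        rw [this]
        have := hmono (S ∪ W) (insert a (S ∪ W)) (Finset.subset_insert _ _)
        omega
      · exact hsub (S ∪ W) (T ∪ W) a (Finset.union_subset_union h (le_refl W)) haT
    have e1 : T ∪ insert a W = insert a (T ∪ W) := Finset.union_insert a T W
    have e2 : S ∪ insert a W = insert a (S ∪ W) := Finset.union_insert a S W
    rw [e1, e2]; omega

lemma fsub_union
    (hmono : ∀ S T : Finset N, S ⊆ T → f S ≤ f T)
    (hsub : ∀ (S T : Finset N) (e : N), S ⊆ T → e ∉ T →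
      f (insert e T) - f T ≤ f (insert e S) - f S)
    (S T : Finset N) : f (S ∪ T) + f (S ∩ T) ≤ f S + f T := by
  have h := fsub_aux f hmono hsub S (S ∩ T) T Finset.inter_subset_right
  have e1 : T ∪ S = S ∪ T := Finset.union_comm T S
  have e2 : S ∩ T ∪ S = S := Finset.union_eq_right.2 Finset.inter_subset_left
  rw [e1, e2] at h
  omega

lemma ghat_submod
    (hmono : ∀ S T : Finset N, S ⊆ T → f S ≤ f T)
    (hsub : ∀ (S T : Finset N) (e : N), S ⊆ T → e ∉ T →
      f (insert e T) - f T ≤ f (insert e S) - f S)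
    (A B : Finset N) :
    ghat f x (A ∪ B) + ghat f x (A ∩ B) ≤ ghat f x A + ghat f x B := by
  obtain ⟨SA, hSA, hA⟩ := Finset.exists_mem_eq_inf'
    (⟨A, by simp⟩ : ((univ.powerset.filter fun S'' => A ⊆ S'')).Nonempty)
    (fun S'' => (f S'' : ℝ) - ∑ i ∈ S'', x i)
  obtain ⟨SB, hSB, hB⟩ := Finset.exists_mem_eq_inf'
    (⟨B, by simp⟩ : ((univ.powerset.filter fun S'' => B ⊆ S'')).Nonempty)
    (fun S'' => (f S'' : ℝ) - ∑ i ∈ S'', x i)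
  have hASA : A ⊆ SA := by simpa using (Finset.mem_filter.1 hSA).2
  have hBSB : B ⊆ SB := by simpa using (Finset.mem_filter.1 hSB).2
  have h1 : ghat f x (A ∪ B) ≤ (f (SA ∪ SB) : ℝ) - ∑ i ∈ SA ∪ SB, x i :=
    ghat_le f x (Finset.union_subset_union hASA hBSB)
  have h2 : ghat f x (A ∩ B) ≤ (f (SA ∩ SB) : ℝ) - ∑ i ∈ SA ∩ SB, x i :=
    ghat_le f x (Finset.inter_subset_inter hASA hBSB)
  have h3 : (f (SA ∪ SB) : ℝ) + f (SA ∩ SB) ≤ f SA + f SB := by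
    have := fsub_union f hmono hsub SA SB
    exact_mod_cast this
  have h4 : ∑ i ∈ SA ∪ SB, x i + ∑ i ∈ SA ∩ SB, x i = ∑ i ∈ SA, x i + ∑ i ∈ SB, x i :=
    Finset.sum_union_inter
  have hgA : ghat f x A = (f SA : ℝ) - ∑ i ∈ SA, x i := hA
  have hgB : ghat f x B = (f SB : ℝ) - ∑ i ∈ SB, x i := hB
  rw [hgA, hgB]
  linarith

lemma fxd2_le {S' S : Finset N} (h : S' ⊆ S) :
    fxd2 f x d S ≤ ghat f x S' + ∑ i ∈ S \ S', d i := by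
  rw [fxd2_def]
  exact Finset.inf'_le _ (Finset.mem_powerset.2 h)

lemma le_fxd2 {S : Finset N} {c : ℝ}
    (h : ∀ S', S' ⊆ S → c ≤ ghat f x S' + ∑ i ∈ S \ S', d i) :
    c ≤ fxd2 f x d S := by
  rw [fxd2_def]
  exact Finset.le_inf' _ _ fun S' hS' => h S' (Finset.mem_powerset.1 hS')

lemma fxd2_exists (S : Finset N) :
    ∃ S', S' ⊆ S ∧ fxd2 f x d S = ghat f x S' + ∑ i ∈ S \ S', d i := by
  obtain ⟨S', hS', hE⟩ := Finset.exists_mem_eq_inf' S.powerset_nonempty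
    (fun S' => ghat f x S' + ∑ i ∈ S \ S', d i)
  exact ⟨S', Finset.mem_powerset.1 hS', by rw [fxd2_def]; exact hE⟩

lemma fxd2_nonneg (hxP : ∀ S : Finset N, ∑ i ∈ S, x i ≤ (f S : ℝ))
    (hd0 : ∀ i, 0 ≤ d i) (S : Finset N) : 0 ≤ fxd2 f x d S :=
  le_fxd2 f x d fun S' _ =>
    add_nonneg (ghat_nonneg f x hxP S') (Finset.sum_nonneg fun i _ => hd0 i)

lemma fxd2_empty (hf0 : f ∅ = 0)
    (hxP : ∀ S : Finset N, ∑ i ∈ S, x i ≤ (f S : ℝ))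
    (hd0 : ∀ i, 0 ≤ d i) : fxd2 f x d ∅ = 0 := by
  refine le_antisymm ?_ (fxd2_nonneg f x d hxP hd0 ∅)
  have := fxd2_le f x d (le_refl (∅ : Finset N))
  simpa [ghat_empty f x hf0 hxP] using this

lemma fxd2_mono (hd0 : ∀ i, 0 ≤ d i) {S T : Finset N} (h : S ⊆ T) :
    fxd2 f x d S ≤ fxd2 f x d T := by
  obtain ⟨S', hS', hE⟩ := fxd2_exists f x d T
  have h1 : fxd2 f x d S ≤ ghat f x (S' ∩ S) + ∑ i ∈ S \ (S' ∩ S), d i :=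
    fxd2_le f x d Finset.inter_subset_right
  have h2 : ghat f x (S' ∩ S) ≤ ghat f x S' := ghat_mono f x Finset.inter_subset_left
  have h3 : ∑ i ∈ S \ (S' ∩ S), d i ≤ ∑ i ∈ T \ S', d i := by
    refine Finset.sum_le_sum_of_subset_of_nonneg ?_ (fun i _ _ => hd0 i)
    intro j hj
    simp only [Finset.mem_sdiff, Finset.mem_inter] at hj ⊢
    exact ⟨h hj.1, fun hj' => hj.2 ⟨hj', hj.1⟩⟩
  rw [hE]; linarith

lemma fxd2_le_add (hd0 : ∀ i, 0 ≤ d i) {S T : Finset N} (h : S ⊆ T) :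
    fxd2 f x d T ≤ fxd2 f x d S + ∑ i ∈ T \ S, d i := by
  obtain ⟨S', hS', hE⟩ := fxd2_exists f x d S
  have h1 : fxd2 f x d T ≤ ghat f x S' + ∑ i ∈ T \ S', d i :=
    fxd2_le f x d (hS'.trans h)
  have h2 : ∑ i ∈ T \ S', d i ≤ ∑ i ∈ (S \ S') ∪ (T \ S), d i := by
    refine Finset.sum_le_sum_of_subset_of_nonneg ?_ (fun i _ _ => hd0 i)
    intro j hj
    simp only [Finset.mem_sdiff, Finset.mem_union] at hj ⊢
    by_cases hjS : j ∈ S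
    · exact Or.inl ⟨hjS, hj.2⟩
    · exact Or.inr ⟨hj.1, hjS⟩
  have h3 : ∑ i ∈ (S \ S') ∪ (T \ S), d i ≤ ∑ i ∈ S \ S', d i + ∑ i ∈ T \ S, d i := by
    have := (Finset.sum_union_inter (s₁ := S \ S') (s₂ := T \ S) (f := d))
    have hnn : 0 ≤ ∑ i ∈ (S \ S') ∩ (T \ S), d i :=
      Finset.sum_nonneg fun i _ => hd0 i
    linarith
  rw [hE]; linarith

lemma fxd2_submod
    (hmono : ∀ S T : Finset N, S ⊆ T → f S ≤ f T)
    (hsub : ∀ (S T : Finset N) (e : N), S ⊆ T → e ∉ T →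
      f (insert e T) - f T ≤ f (insert e S) - f S)
    (hd0 : ∀ i, 0 ≤ d i) (S T : Finset N) :
    fxd2 f x d (S ∪ T) + fxd2 f x d (S ∩ T) ≤ fxd2 f x d S + fxd2 f x d T := by
  obtain ⟨S', hS', hES⟩ := fxd2_exists f x d S
  obtain ⟨T', hT', hET⟩ := fxd2_exists f x d T
  have h1 : fxd2 f x d (S ∪ T) ≤ ghat f x (S' ∪ T') + ∑ i ∈ (S ∪ T) \ (S' ∪ T'), d i :=
    fxd2_le f x d (Finset.union_subset_union hS' hT')
  have h2 : fxd2 f x d (S ∩ T) ≤ ghat f x (S' ∩ T') + ∑ i ∈ (S ∩ T) \ (S' ∩ T'), d i :=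
    fxd2_le f x d (Finset.inter_subset_inter hS' hT')
  have h3 := ghat_submod f x hmono hsub S' T'
  -- d-sum inequality
  set L1 := (S ∪ T) \ (S' ∪ T') with hL1
  set L2 := (S ∩ T) \ (S' ∩ T') with hL2
  set R1 := S \ S' with hR1
  set R2 := T \ T' with hR2
  have hu : L1 ∪ L2 ⊆ R1 ∪ R2 := by
    intro j hj
    simp only [hL1, hL2, hR1, hR2, Finset.mem_union, Finset.mem_sdiff,
      Finset.mem_inter] at hj ⊢
    tauto
  have hi : L1 ∩ L2 ⊆ R1 ∩ R2 := by
    intro j hj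
    simp only [hL1, hL2, hR1, hR2, Finset.mem_union, Finset.mem_sdiff,
      Finset.mem_inter] at hj ⊢
    tauto
  have h4 : ∑ i ∈ L1, d i + ∑ i ∈ L2, d i ≤ ∑ i ∈ R1, d i + ∑ i ∈ R2, d i := by
    have e1 : ∑ i ∈ L1 ∪ L2, d i + ∑ i ∈ L1 ∩ L2, d i
        = ∑ i ∈ L1, d i + ∑ i ∈ L2, d i := Finset.sum_union_inter
    have e2 : ∑ i ∈ R1 ∪ R2, d i + ∑ i ∈ R1 ∩ R2, d i
        = ∑ i ∈ R1, d i + ∑ i ∈ R2, d i := Finset.sum_union_inter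
    have i1 : ∑ i ∈ L1 ∪ L2, d i ≤ ∑ i ∈ R1 ∪ R2, d i :=
      Finset.sum_le_sum_of_subset_of_nonneg hu (fun i _ _ => hd0 i)
    have i2 : ∑ i ∈ L1 ∩ L2, d i ≤ ∑ i ∈ R1 ∩ R2, d i :=
      Finset.sum_le_sum_of_subset_of_nonneg hi (fun i _ _ => hd0 i)
    linarith
  rw [hES, hET]
  linarith

lemma fxd2_insert_submod
    (hmono : ∀ S T : Finset N, S ⊆ T → f S ≤ f T)
    (hsub : ∀ (S T : Finset N) (e : N), S ⊆ T → e ∉ T →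
      f (insert e T) - f T ≤ f (insert e S) - f S)
    (hd0 : ∀ i, 0 ≤ d i) {S T : Finset N} {e : N} (h : S ⊆ T) (he : e ∉ T) :
    fxd2 f x d (insert e T) + fxd2 f x d S ≤ fxd2 f x d (insert e S) + fxd2 f x d T := by
  have hmain := fxd2_submod f x d hmono hsub hd0 (insert e S) T
  have e1 : insert e S ∪ T = insert e T := by
    rw [Finset.insert_union]
    congr 1
    exact Finset.union_eq_right.2 h
  have e2 : insert e S ∩ T = S := by
    ext j
    simp only [Finset.mem_inter, Finset.mem_insert]
    constructor
    · rintro ⟨(rfl | hj), hjT⟩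
      · exact absurd hjT he
      · exact hj
    · intro hj; exact ⟨Or.inr hj, h hj⟩
  rw [e1, e2] at hmain
  linarith

/-- Membership: a feasible vector satisfies all rank constraints. -/
lemma mem_rank (hd0 : ∀ i, 0 ≤ d i) {u : N → ℝ}
    (hu0 : ∀ j, 0 ≤ u j) (hud : ∀ j, u j ≤ d j)
    (huP : ∀ S : Finset N, ∑ j ∈ S, (x j + u j) ≤ (f S : ℝ))
    (A : Finset N) : ∑ j ∈ A, u j ≤ fxd2 f x d A := by
  refine le_fxd2 f x d fun S' hS' => ?_
  have hsplit : ∑ j ∈ A \ S', u j + ∑ j ∈ S', u j = ∑ j ∈ A, u j :=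
    Finset.sum_sdiff hS'
  have h1 : ∑ j ∈ S', u j ≤ ghat f x S' := by
    refine le_ghat f x fun S'' hS'' => ?_
    have ha : ∑ j ∈ S', u j ≤ ∑ j ∈ S'', u j :=
      Finset.sum_le_sum_of_subset_of_nonneg hS'' (fun j _ _ => hu0 j)
    have hb := huP S''
    rw [Finset.sum_add_distrib] at hb
    linarith
  have h2 : ∑ j ∈ A \ S', u j ≤ ∑ j ∈ A \ S', d j :=
    Finset.sum_le_sum fun j _ => hud j
  linarith

/-- Greedy construction of a tight vector. -/
lemma greedy (hf0 : f ∅ = 0)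
    (hmono : ∀ S T : Finset N, S ⊆ T → f S ≤ f T)
    (hsub : ∀ (S T : Finset N) (e : N), S ⊆ T → e ∉ T →
      f (insert e T) - f T ≤ f (insert e S) - f S)
    (hxP : ∀ S : Finset N, ∑ i ∈ S, x i ≤ (f S : ℝ))
    (hd0 : ∀ i, 0 ≤ d i) (T : Finset N) :
    ∃ u : N → ℝ, (∀ j, 0 ≤ u j) ∧ (∀ j, j ∉ T → u j = 0) ∧
      (∀ A : Finset N, ∑ j ∈ A, u j ≤ fxd2 f x d (A ∩ T)) ∧
      ∑ j ∈ T, u j = fxd2 f x d T := by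
  induction T using Finset.induction_on with
  | empty =>
    refine ⟨fun _ => 0, fun j => le_refl 0, fun j _ => rfl, fun A => ?_, ?_⟩
    · simp [fxd2_nonneg f x d hxP hd0]
    · simp [fxd2_empty f x d hf0 hxP hd0]
  | @insert a T ha ih =>
    obtain ⟨u', hu'0, hu'supp, hu'le, hu'tight⟩ := ih
    set m := fxd2 f x d (insert a T) - fxd2 f x d T with hm
    have hm0 : 0 ≤ m := by
      have := fxd2_mono f x d hd0 (Finset.subset_insert a T)
      simp only [hm]; linarith
    refine ⟨fun j => if j = a then m else u' j, ?_, ?_, ?_, ?_⟩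
    · intro j; by_cases hj : j = a <;> simp [hj, hm0, hu'0 j]
    · intro j hj
      have hja : j ≠ a := fun h => hj (h ▸ Finset.mem_insert_self a T)
      have hjT : j ∉ T := fun h => hj (Finset.mem_insert_of_mem h)
      simp [hja, hu'supp j hjT]
    · intro A
      by_cases haA : a ∈ A
      · have hsplit : ∑ j ∈ A, (if j = a then m else u' j)
            = m + ∑ j ∈ A.erase a, u' j := by
          rw [← Finset.add_sum_erase _ _ haA]
          simp only [if_pos rfl]
          congr 1
          refine Finset.sum_congr rfl fun j hj => ?_
          simp [Finset.ne_of_mem_erase hj]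
        rw [hsplit]
        have h1 : ∑ j ∈ A.erase a, u' j ≤ fxd2 f x d ((A.erase a) ∩ T) :=
          hu'le (A.erase a)
        have hBsub : (A.erase a) ∩ T ⊆ T := Finset.inter_subset_right
        have haB : a ∉ (A.erase a) ∩ T := fun h =>
          (Finset.notMem_erase a A) (Finset.mem_inter.1 h).1
        have hkey := fxd2_insert_submod f x d hmono hsub hd0 hBsub ha
        have hAe : A ∩ insert a T = insert a ((A.erase a) ∩ T) := by
          ext j
          simp only [Finset.mem_inter, Finset.mem_insert, Finset.mem_erase]
          constructor
          · rintro ⟨hjA, (rfl | hjT)⟩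
            · exact Or.inl rfl
            · by_cases hja : j = a
              · exact Or.inl hja
              · exact Or.inr ⟨⟨hja, hjA⟩, hjT⟩
          · rintro (rfl | ⟨⟨hja, hjA⟩, hjT⟩)
            · exact ⟨haA, Or.inl rfl⟩
            · exact ⟨hjA, Or.inr hjT⟩
        rw [hAe]
        simp only [hm]
        linarith
      · have hsplit : ∑ j ∈ A, (if j = a then m else u' j) = ∑ j ∈ A, u' j := by
          refine Finset.sum_congr rfl fun j hj => ?_
          have : j ≠ a := fun h => haA (h ▸ hj)
          simp [this]
        have hAe : A ∩ insert a T = A ∩ T := by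
          ext j
          simp only [Finset.mem_inter, Finset.mem_insert]
          constructor
          · rintro ⟨hjA, (rfl | hjT)⟩
            · exact absurd hjA haA
            · exact ⟨hjA, hjT⟩
          · rintro ⟨hjA, hjT⟩; exact ⟨hjA, Or.inr hjT⟩
        rw [hsplit, hAe]
        exact hu'le A
    · rw [Finset.sum_insert ha]
      have : ∑ j ∈ T, (if j = a then m else u' j) = ∑ j ∈ T, u' j := by
        refine Finset.sum_congr rfl fun j hj => ?_
        have : j ≠ a := fun h => ha (h ▸ hj)
        simp [this]
      have ha' : (if a = a then m else u' a) = m := if_pos rfl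
      rw [ha', this, hu'tight, hm]
      ring

end aux

theorem stmt7 {N : Type*} [DecidableEq N] [Fintype N]
    (f : Finset N → ℤ)
    (hf0 : f ∅ = 0) (hfnn : ∀ S, 0 ≤ f S)
    (hmono : ∀ S T : Finset N, S ⊆ T → f S ≤ f T)
    (hsub : ∀ (S T : Finset N) (e : N), S ⊆ T → e ∉ T →
      f (insert e T) - f T ≤ f (insert e S) - f S)
    (x d : N → ℝ) (hx0 : ∀ i, 0 ≤ x i) (hd0 : ∀ i, 0 ≤ d i)
    (hxP : ∀ S : Finset N, ∑ i ∈ S, x i ≤ (f S : ℝ)) (i : N) :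
    sSup {w : ℝ | 0 ≤ w ∧ Pslice f x d i w = Pslice f x d i 0}
      = fxd2 f x d univ - fxd2 f x d (univ \ {i}) := by
  set T : Finset N := univ \ {i} with hT
  set M : ℝ := fxd2 f x d univ - fxd2 f x d T with hM
  have hiT : i ∉ T := by simp [hT]
  have hTuniv : T ⊆ univ := Finset.subset_univ T
  have hM0 : 0 ≤ M := by
    have := fxd2_mono f x d hd0 hTuniv
    simp only [hM]; linarith
  -- auxiliary: rank constraints imply feasibility
  have rank_mem : ∀ u : N → ℝ, (∀ j, 0 ≤ u j) →
      (∀ A : Finset N, ∑ j ∈ A, u j ≤ fxd2 f x d A) →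
      (∀ j, u j ≤ d j) ∧ (∀ S : Finset N, ∑ j ∈ S, (x j + u j) ≤ (f S : ℝ)) := by
    intro u hu0 hur
    constructor
    · intro j
      have h1 := hur {j}
      have h2 : fxd2 f x d {j} ≤ ghat f x ∅ + ∑ k ∈ ({j} : Finset N) \ ∅, d k :=
        fxd2_le f x d (Finset.empty_subset _)
      rw [ghat_empty f x hf0 hxP] at h2
      simp at h1 h2
      linarith
    · intro S
      have h1 := hur S
      have h2 : fxd2 f x d S ≤ ghat f x S + ∑ k ∈ S \ S, d k :=
        fxd2_le f x d (le_refl S)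
      have h3 : ghat f x S ≤ (f S : ℝ) - ∑ k ∈ S, x k := ghat_le f x (le_refl S)
      rw [Finset.sum_add_distrib]
      simp at h2
      linarith
  -- M is in the set
  have slice_down : ∀ w : ℝ, 0 ≤ w → Pslice f x d i w ⊆ Pslice f x d i 0 := by
    intro w hw y hy
    obtain ⟨u, hu0, hud, huP, hui, hyu⟩ := hy
    refine ⟨fun j => if j = i then 0 else u j, ?_, ?_, ?_, by simp, ?_⟩
    · intro j; by_cases hj : j = i <;> simp [hj, hu0 j]
    · intro j; by_cases hj : j = i <;> simp [hj, hd0 i, hud j]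
    · intro S
      refine le_trans (Finset.sum_le_sum fun j _ => ?_) (huP S)
      by_cases hj : j = i
      · simp [hj, hui]; linarith [hx0 j, hw, hx0 i]
      · simp [hj]
    · rw [hyu]
      funext j
      by_cases hj : j = i <;> simp [hj]
  have hMmem : Pslice f x d i M = Pslice f x d i 0 := by
    refine Set.Subset.antisymm (slice_down M hM0) ?_
    intro y hy
    obtain ⟨u, hu0, hud, huP, hui, hyu⟩ := hy
    set u' : N → ℝ := fun j => if j = i then M else u j with hu'
    have hu'0 : ∀ j, 0 ≤ u' j := by
      intro j; by_cases hj : j = i <;> simp [hu', hj, hM0, hu0 j]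
    have hu'r : ∀ A : Finset N, ∑ j ∈ A, u' j ≤ fxd2 f x d A := by
      intro A
      by_cases hiA : i ∈ A
      · have hsplit : ∑ j ∈ A, u' j = M + ∑ j ∈ A.erase i, u j := by
          rw [← Finset.add_sum_erase _ _ hiA]
          simp only [hu', if_pos rfl]
          congr 1
          refine Finset.sum_congr rfl fun j hj => ?_
          simp [Finset.ne_of_mem_erase hj]
        have h1 : ∑ j ∈ A.erase i, u j ≤ fxd2 f x d (A.erase i) :=
          mem_rank f x d hd0 hu0 hud huP (A.erase i)
        have hkey := fxd2_insert_submod f x d hmono hsub hd0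
          (S := A.erase i) (T := T) (e := i) ?_ hiT
        · have e1 : insert i T = univ := by
            rw [hT]
            ext j
            simp only [Finset.mem_insert, Finset.mem_sdiff, Finset.mem_univ,
              Finset.mem_singleton]
            by_cases hj : j = i <;> simp [hj]
          have e2 : insert i (A.erase i) = A := Finset.insert_erase hiA
          rw [e1, e2] at hkey
          rw [hsplit]
          simp only [hM]
          linarith
        · intro j hj
          simp only [hT, Finset.mem_sdiff, Finset.mem_univ, Finset.mem_singleton]
          exact ⟨trivial, Finset.ne_of_mem_erase hj⟩
      · have hsplit : ∑ j ∈ A, u' j = ∑ j ∈ A, u j := by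
          refine Finset.sum_congr rfl fun j hj => ?_
          have : j ≠ i := fun h => hiA (h ▸ hj)
          simp [hu', this]
        rw [hsplit]
        exact mem_rank f x d hd0 hu0 hud huP A
    obtain ⟨hu'd, hu'P⟩ := rank_mem u' hu'0 hu'r
    refine ⟨u', hu'0, hu'd, hu'P, by simp [hu'], ?_⟩
    rw [hyu]
    funext j
    by_cases hj : j = i <;> simp [hu', hj]
  -- upper bound
  have hub : ∀ w ∈ {w : ℝ | 0 ≤ w ∧ Pslice f x d i w = Pslice f x d i 0}, w ≤ M := by
    rintro w ⟨hw0, hweq⟩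
    obtain ⟨v, hv0, hvsupp, hvle, hvtight⟩ := greedy f x d hf0 hmono hsub hxP hd0 T
    have hvr : ∀ A : Finset N, ∑ j ∈ A, v j ≤ fxd2 f x d A := by
      intro A
      exact le_trans (hvle A) (fxd2_mono f x d hd0 Finset.inter_subset_left)
    obtain ⟨hvd, hvP⟩ := rank_mem v hv0 hvr
    have hvi : v i = 0 := hvsupp i hiT
    have hy0 : (fun j => if j = i then (0:ℝ) else v j) ∈ Pslice f x d i 0 :=
      ⟨v, hv0, hvd, hvP, hvi, rfl⟩
    rw [← hweq] at hy0
    obtain ⟨u, hu0, hud, huP, hui, hyu⟩ := hy0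
    have huv : ∀ j, j ≠ i → u j = v j := by
      intro j hj
      have := congrFun hyu j
      simpa [hj] using this.symm
    have h1 : ∑ j ∈ univ, u j ≤ fxd2 f x d univ :=
      mem_rank f x d hd0 hu0 hud huP univ
    have hsplit : ∑ j ∈ (univ : Finset N), u j = w + ∑ j ∈ T, v j := by
      have hiu : i ∈ (univ : Finset N) := Finset.mem_univ i
      rw [← Finset.add_sum_erase _ _ hiu, hui]
      congr 1
      have hTe : T = (univ : Finset N).erase i := by
        rw [hT]; ext j; simp [Finset.mem_erase, and_comm]
      rw [hTe]
      refine Finset.sum_congr rfl fun j hj => ?_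
      exact huv j (Finset.ne_of_mem_erase hj)
    rw [hsplit, hvtight] at h1
    simp only [hM]
    linarith
  -- conclude
  have hMset : M ∈ {w : ℝ | 0 ≤ w ∧ Pslice f x d i w = Pslice f x d i 0} :=
    ⟨hM0, hMmem⟩
  refine le_antisymm ?_ ?_
  · exact csSup_le ⟨M, hMset⟩ hub
  · exact le_csSup ⟨M, hub⟩ hMset
end

section
/- Let f: 2^N → ℤ≥0 be monotone submodular with f(∅)=0, x ∈ P(f), d ∈ ℝ^N_+. Suppose f_{x,d}(N) = f_{x,d}(N∖{j}) for every j ∈ N (no buyer can clinch). If i ⪯ k (in the unsaturation relation), then d_i ≤ d_k. -/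
open Finset

noncomputable def fxd {N : Type*} [DecidableEq N] [Fintype N]
    (f : Finset N → ℤ) (x d : N → ℝ) (S : Finset N) : ℝ :=
  S.powerset.inf' (S.powerset_nonempty) fun S' =>
    (f S' : ℝ) - ∑ i ∈ S', x i + ∑ i ∈ S \ S', d i

lemma inf'_le_inf'_add {α : Type*} {s : Finset α} (h : s.Nonempty) (F G : α → ℝ) (c : ℝ)
    (hFG : ∀ a ∈ s, F a ≤ G a + c) : s.inf' h F ≤ s.inf' h G + c := by
  obtain ⟨a, ha, hm⟩ := Finset.exists_mem_eq_inf' h G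
  rw [hm]
  exact (Finset.inf'_le F ha).trans (hFG a ha)

lemma fxd_le_remove {N : Type*} [DecidableEq N] [Fintype N]
    (f : Finset N → ℤ) (x d : N → ℝ) (S : Finset N) (j : N) (hj : j ∈ S) :
    fxd f x d S ≤ fxd f x d (S \ {j}) + d j := by
  unfold fxd
  obtain ⟨S', hS', hm⟩ := Finset.exists_mem_eq_inf' ((S \ {j}).powerset_nonempty)
    (fun S' => (f S' : ℝ) - ∑ i ∈ S', x i + ∑ i ∈ (S \ {j}) \ S', d i)
  rw [hm]
  have hS'sub : S' ⊆ S \ {j} := Finset.mem_powerset.mp hS'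
  have hjS' : j ∉ S' := fun h => (Finset.mem_sdiff.mp (hS'sub h)).2 (Finset.mem_singleton_self j)
  have hle : S.powerset.inf' (S.powerset_nonempty)
      (fun S' => (f S' : ℝ) - ∑ i ∈ S', x i + ∑ i ∈ S \ S', d i) ≤
      (f S' : ℝ) - ∑ i ∈ S', x i + ∑ i ∈ S \ S', d i :=
    Finset.inf'_le _ (Finset.mem_powerset.mpr ((hS'sub.trans (Finset.sdiff_subset))))
  refine hle.trans ?_
  have hjmem : j ∈ S \ S' := Finset.mem_sdiff.mpr ⟨hj, hjS'⟩
  have hsum : ∑ i ∈ S \ S', d i = ∑ i ∈ (S \ {j}) \ S', d i + d j := by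
    rw [Finset.sum_eq_sum_sdiff_singleton_add hjmem d, sdiff_sdiff_comm]
  rw [hsum]
  ring_nf
  exact le_refl _

lemma fxd_congr_update {N : Type*} [DecidableEq N] [Fintype N]
    (f : Finset N → ℤ) (x d : N → ℝ) (S : Finset N) (k : N) (hk : k ∉ S) :
    fxd f x (Function.update d k 0) S = fxd f x d S := by
  unfold fxd
  apply Finset.inf'_congr _ rfl
  intro S' hS'
  congr 1
  apply Finset.sum_congr rfl
  intro j hj
  have hjS : j ∈ S := (Finset.mem_sdiff.mp hj).1
  have : j ≠ k := fun h => hk (h ▸ hjS)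
  exact Function.update_of_ne this 0 d

theorem stmt12 {N : Type*} [DecidableEq N] [Fintype N]
    (f : Finset N → ℤ)
    (hf0 : f ∅ = 0) (hfnn : ∀ S, 0 ≤ f S)
    (hmono : ∀ S T : Finset N, S ⊆ T → f S ≤ f T)
    (hsub : ∀ (S T : Finset N) (e : N), S ⊆ T → e ∉ T →
      f (insert e T) - f T ≤ f (insert e S) - f S)
    (x d : N → ℝ) (hx0 : ∀ i, 0 ≤ x i) (hd0 : ∀ i, 0 ≤ d i)
    (hxP : ∀ S : Finset N, ∑ i ∈ S, x i ≤ (f S : ℝ))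
    (hnoclinch : ∀ j : N, fxd f x d univ = fxd f x d (univ \ {j}))
    (i k : N)
    (hik : fxd f x (Function.update d k 0) univ
        - fxd f x (Function.update d k 0) (univ \ {i}) = Function.update d k 0 i) :
    d i ≤ d k := by
  by_cases hik' : i = k
  · subst hik'; exact le_refl _
  set d' := Function.update d k 0 with hd'def
  have hd'k : d' k = 0 := Function.update_self k 0 d
  have hd'i : d' i = d i := Function.update_of_ne hik' 0 d
  -- (a) g'(univ) ≤ g'(univ \ {k})
  have ha : fxd f x d' univ ≤ fxd f x d' (univ \ {k}) := by
    have := fxd_le_remove f x d' univ k (Finset.mem_univ k)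
    rwa [hd'k, add_zero] at this
  -- (b) g'(univ \ {k}) = g(univ \ {k})
  have hb : fxd f x d' (univ \ {k}) = fxd f x d (univ \ {k}) :=
    fxd_congr_update f x d (univ \ {k}) k (by simp)
  -- (c) g(univ \ {i}) ≤ g'(univ \ {i}) + d k
  have hc : fxd f x d (univ \ {i}) ≤ fxd f x d' (univ \ {i}) + d k := by
    unfold fxd
    apply inf'_le_inf'_add
    intro S' hS'
    have hsum : ∀ T : Finset N, ∑ j ∈ T, d j ≤ ∑ j ∈ T, d' j + d k := by
      intro T
      by_cases hkT : k ∈ T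
      · rw [Finset.sum_eq_sum_sdiff_singleton_add hkT d,
            Finset.sum_eq_sum_sdiff_singleton_add hkT d', hd'k, add_zero]
        have : ∑ j ∈ T \ {k}, d j = ∑ j ∈ T \ {k}, d' j := by
          apply Finset.sum_congr rfl
          intro j hj
          have : j ≠ k := fun h => (Finset.mem_sdiff.mp hj).2 (h ▸ Finset.mem_singleton_self k)
          exact (Function.update_of_ne this 0 d).symm
        linarith
      · have : ∑ j ∈ T, d j = ∑ j ∈ T, d' j := by
          apply Finset.sum_congr rfl
          intro j hj
          have : j ≠ k := fun h => hkT (h ▸ hj)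
          exact (Function.update_of_ne this 0 d).symm
        linarith [hd0 k]
    linarith [hsum ((univ \ {i}) \ S')]
  have hnck := hnoclinch k
  have hnci := hnoclinch i
  have : d i = fxd f x d' univ - fxd f x d' (univ \ {i}) := by rw [hik, hd'i]
  linarith
end

section
/- Let f: 2^N → ℤ≥0 be monotone submodular with f(∅)=0, x ∈ P(f), d ∈ ℝ^N_+ with f_{x,d}(N) = f_{x,d}(N∖{j}) for all j ∈ N. Fix i ∈ N and Δ_i > 0, and let d' be d with d_i replaced by d_i − Δ_i ≥ 0. For any k ≠ i, let δ_k := f_{x,d'}(N) − f_{x,d'}(N∖{k}). Then δ_k = Δ_i if i ⪯ k (with respect to x, d), and δ_k < Δ_i otherwise. -/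
/-! Write v(S) = f(S) − x(S) + d(N∖S) and F = min_S v(S) = f_{x,d}(N). Then
f_{x,d}(T) = min_{S ⊆ T} v(S) − d(N∖T), lowering d_j by D lowers v(S) by D exactly when
j ∉ S, and the hypothesis f_{x,d}(N) = f_{x,d}(N∖j) says min_{S ∌ j} v(S) = F + d_j.
Consequently neither d' nor d^{-k} changes the value at N, and both δ_k ≤ Δ and
f_{x,d^{-k}}(N) − f_{x,d^{-k}}(N∖i) ≤ d_i hold, each with equality exactly when some S
avoiding both i and k has v(S) ≤ F + d_k. -/

open Finset

section

variable {N : Type*} [DecidableEq N] [Fintype N] (f : Finset N → ℤ) (x : N → ℝ)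

def fxdObjective (w : N → ℝ) (S : Finset N) : ℝ :=
  f S - ∑ j ∈ S, x j + ∑ j ∈ univ \ S, w j

variable {f x} {w : N → ℝ}

lemma fxd_term_eq_fxdObjective_sub {T S : Finset N} (hST : S ⊆ T) :
    (f S : ℝ) - ∑ j ∈ S, x j + ∑ j ∈ T \ S, w j
      = fxdObjective f x w S - ∑ j ∈ univ \ T, w j := by
  rw [fxdObjective, sum_sdiff_eq_sub hST, sum_sdiff_eq_sub (subset_univ S),
    sum_sdiff_eq_sub (subset_univ T)]
  ring

lemma le_fxd_iff {T : Finset N} {a : ℝ} :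
    a ≤ fxd f x w T ↔ ∀ S ⊆ T, a + ∑ j ∈ univ \ T, w j ≤ fxdObjective f x w S := by
  simp only [fxd, le_inf'_iff, mem_powerset]
  refine forall₂_congr fun S hST => ?_
  rw [fxd_term_eq_fxdObjective_sub hST, le_sub_iff_add_le]

lemma fxd_le_iff {T : Finset N} {a : ℝ} :
    fxd f x w T ≤ a ↔ ∃ S ⊆ T, fxdObjective f x w S ≤ a + ∑ j ∈ univ \ T, w j := by
  simp only [fxd, inf'_le_iff, mem_powerset]
  refine exists_congr fun S => and_congr_right fun hST => ?_
  rw [fxd_term_eq_fxdObjective_sub hST, sub_le_iff_le_add]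

lemma le_fxd_univ_iff {a : ℝ} : a ≤ fxd f x w univ ↔ ∀ S, a ≤ fxdObjective f x w S := by
  simp [le_fxd_iff]

lemma fxd_univ_le_iff {a : ℝ} : fxd f x w univ ≤ a ↔ ∃ S, fxdObjective f x w S ≤ a := by
  simp [fxd_le_iff]

lemma le_fxd_univ_sdiff_singleton_iff {p : N} {a : ℝ} :
    a ≤ fxd f x w (univ \ {p}) ↔ ∀ S, p ∉ S → a + w p ≤ fxdObjective f x w S := by
  simp [le_fxd_iff, subset_sdiff]

lemma fxd_univ_sdiff_singleton_le_iff {p : N} {a : ℝ} :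
    fxd f x w (univ \ {p}) ≤ a ↔ ∃ S, p ∉ S ∧ fxdObjective f x w S ≤ a + w p := by
  simp [fxd_le_iff, subset_sdiff]

lemma fxdObjective_update_of_mem {j : N} {S : Finset N} (c : ℝ) (hj : j ∈ S) :
    fxdObjective f x (Function.update w j c) S = fxdObjective f x w S := by
  simp [fxdObjective, sum_update_of_notMem (notMem_sdiff_of_mem_right hj)]

lemma fxdObjective_update_of_notMem {j : N} {S : Finset N} (c : ℝ) (hj : j ∉ S) :
    fxdObjective f x (Function.update w j c) S = fxdObjective f x w S - w j + c := by
  have hjS : j ∈ univ \ S := mem_sdiff.2 ⟨mem_univ j, hj⟩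
  rw [fxdObjective, fxdObjective, sum_update_of_mem hjS, ← add_sum_erase _ _ hjS, erase_eq]
  ring

lemma fxd_univ_le_fxdObjective (S : Finset N) : fxd f x w univ ≤ fxdObjective f x w S :=
  le_fxd_univ_iff.1 le_rfl S

lemma fxd_univ_sdiff_singleton_add_le_fxdObjective {p : N} {S : Finset N} (hp : p ∉ S) :
    fxd f x w (univ \ {p}) + w p ≤ fxdObjective f x w S :=
  le_fxd_univ_sdiff_singleton_iff.1 le_rfl S hp

variable {j p q : N} {a c t : ℝ}

lemma fxd_update_univ_of_le (hc : c ≤ w j)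
    (h : fxd f x w univ ≤ fxd f x w (univ \ {j}) + c) :
    fxd f x (Function.update w j c) univ = fxd f x w univ := by
  refine le_antisymm ?_ (le_fxd_univ_iff.2 fun S => ?_)
  · obtain ⟨S, hS⟩ := fxd_univ_le_iff.1 (le_refl (fxd f x w univ))
    refine fxd_univ_le_iff.2 ⟨S, ?_⟩
    by_cases hj : j ∈ S
    · rwa [fxdObjective_update_of_mem c hj]
    · rw [fxdObjective_update_of_notMem c hj]
      linarith
  · by_cases hj : j ∈ S
    · rw [fxdObjective_update_of_mem c hj]
      exact fxd_univ_le_fxdObjective S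
    · have : fxd f x w (univ \ {j}) + w j ≤ fxdObjective f x w S :=
        fxd_univ_sdiff_singleton_add_le_fxdObjective hj
      rw [fxdObjective_update_of_notMem c hj]
      linarith

lemma le_fxd_update_univ_sdiff_singleton (hpq : p ≠ q)
    (ha : a ≤ fxd f x w (univ \ {p})) (ht : t = a + w p + (w q - c))
    (hS : ∀ S, p ∉ S → q ∉ S → t ≤ fxdObjective f x w S) :
    a ≤ fxd f x (Function.update w q c) (univ \ {p}) := by
  refine le_fxd_univ_sdiff_singleton_iff.2 fun S hp => ?_
  rw [Function.update_of_ne hpq]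
  by_cases hq : q ∈ S
  · rw [fxdObjective_update_of_mem c hq]
    exact le_fxd_univ_sdiff_singleton_iff.1 ha S hp
  · rw [fxdObjective_update_of_notMem c hq]
    linarith [hS S hp hq]

lemma fxd_update_univ_sdiff_singleton_le_iff (hpq : p ≠ q)
    (ha : a < fxd f x w (univ \ {p})) (ht : t = a + w p + (w q - c)) :
    fxd f x (Function.update w q c) (univ \ {p}) ≤ a ↔
      ∃ S, p ∉ S ∧ q ∉ S ∧ fxdObjective f x w S ≤ t := by
  rw [fxd_univ_sdiff_singleton_le_iff, Function.update_of_ne hpq]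
  refine exists_congr fun S => and_congr_right fun hp => ?_
  by_cases hq : q ∈ S
  · have : fxd f x w (univ \ {p}) + w p ≤ fxdObjective f x w S :=
      fxd_univ_sdiff_singleton_add_le_fxdObjective hp
    rw [fxdObjective_update_of_mem c hq]
    simp only [hq, not_true_eq_false, false_and, iff_false, not_le]
    linarith
  · rw [fxdObjective_update_of_notMem c hq]
    simp only [hq, not_false_eq_true, true_and]
    constructor <;> intro h <;> linarith

end

theorem stmt13_general {N : Type*} [DecidableEq N] [Fintype N]
    (f : Finset N → ℤ)
    (x d : N → ℝ) (hd0 : ∀ i, 0 ≤ d i)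
    (hnoclinch : ∀ j : N, fxd f x d univ = fxd f x d (univ \ {j}))
    (i : N) (Δ : ℝ) (hΔ : 0 < Δ) (hΔd : 0 ≤ d i - Δ)
    (k : N) (hki : k ≠ i) :
    (fxd f x (Function.update d k 0) univ
        - fxd f x (Function.update d k 0) (univ \ {i}) = Function.update d k 0 i →
      fxd f x (Function.update d i (d i - Δ)) univ
        - fxd f x (Function.update d i (d i - Δ)) (univ \ {k}) = Δ) ∧
    (fxd f x (Function.update d k 0) univ
        - fxd f x (Function.update d k 0) (univ \ {i}) ≠ Function.update d k 0 i →
      fxd f x (Function.update d i (d i - Δ)) univ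
        - fxd f x (Function.update d i (d i - Δ)) (univ \ {k}) < Δ) := by
  set F := fxd f x d univ
  have hFk : ∀ S, k ∉ S → i ∉ S → F + d k ≤ fxdObjective f x d S := fun S hkS _ => by
    rw [hnoclinch k]
    exact fxd_univ_sdiff_singleton_add_le_fxdObjective hkS
  rw [fxd_update_univ_of_le (hd0 k) (by rw [← hnoclinch k, add_zero]),
    fxd_update_univ_of_le (by linarith) (by rw [← hnoclinch i]; linarith),
    Function.update_of_ne hki.symm]
  have hδ_le := le_fxd_update_univ_sdiff_singleton (c := d i - Δ) hki (a := F - Δ)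
    (by rw [← hnoclinch k]; linarith) (by ring) hFk
  have hprec_le := le_fxd_update_univ_sdiff_singleton (c := 0) hki.symm (a := F - d i)
    (by rw [← hnoclinch i]; linarith) (by ring) fun S hiS hkS => hFk S hkS hiS
  have hδ_iff := fxd_update_univ_sdiff_singleton_le_iff (c := d i - Δ) hki (a := F - Δ)
    (by rw [← hnoclinch k]; linarith) (t := F + d k) (by ring)
  have hprec_iff := fxd_update_univ_sdiff_singleton_le_iff (c := 0) hki.symm (a := F - d i)
    (by rw [← hnoclinch i]; linarith) (t := F + d k) (by ring) |>.trans
      (exists_congr fun _ => and_left_comm)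
  constructor
  · intro hprec
    have := le_antisymm (hδ_iff.2 (hprec_iff.1 (by linarith))) hδ_le
    linarith
  · intro hprec
    have hδ_ne : fxd f x (Function.update d i (d i - Δ)) (univ \ {k}) ≠ F - Δ := fun he =>
      hprec (by linarith [le_antisymm (hprec_iff.2 (hδ_iff.1 he.le)) hprec_le])
    linarith [lt_of_le_of_ne hδ_le hδ_ne.symm]

theorem stmt13 {N : Type*} [DecidableEq N] [Fintype N]
    (f : Finset N → ℤ)
    (hf0 : f ∅ = 0) (hfnn : ∀ S, 0 ≤ f S)
    (hmono : ∀ S T : Finset N, S ⊆ T → f S ≤ f T)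
    (hsub : ∀ (S T : Finset N) (e : N), S ⊆ T → e ∉ T →
      f (insert e T) - f T ≤ f (insert e S) - f S)
    (x d : N → ℝ) (hx0 : ∀ i, 0 ≤ x i) (hd0 : ∀ i, 0 ≤ d i)
    (hxP : ∀ S : Finset N, ∑ i ∈ S, x i ≤ (f S : ℝ))
    (hnoclinch : ∀ j : N, fxd f x d univ = fxd f x d (univ \ {j}))
    (i : N) (Δ : ℝ) (hΔ : 0 < Δ) (hΔd : 0 ≤ d i - Δ)
    (k : N) (hki : k ≠ i) :
    (fxd f x (Function.update d k 0) univ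
        - fxd f x (Function.update d k 0) (univ \ {i}) = Function.update d k 0 i →
      fxd f x (Function.update d i (d i - Δ)) univ
        - fxd f x (Function.update d i (d i - Δ)) (univ \ {k}) = Δ) ∧
    (fxd f x (Function.update d k 0) univ
        - fxd f x (Function.update d k 0) (univ \ {i}) ≠ Function.update d k 0 i →
      fxd f x (Function.update d i (d i - Δ)) univ
        - fxd f x (Function.update d i (d i - Δ)) (univ \ {k}) < Δ) :=
  stmt13_general f x d hd0 hnoclinch i Δ hΔ hΔd k hki
end

section
/- Let N be buyers with valuations v_i > 0 and budgets B_i > 0, f monotone submodular integer-valued with f(∅)=0, and the virtual-buyer construction (i_a, i_b with v_{i_a}=v_i, B_{i_a}=⌊B_i/v_i⌋v_i, v_{i_b}=B_{i_b}=B_i−⌊B_i/v_i⌋v_i, and f'(S')=f(Γ(S'))). Then the optimal value of max{ Σ_{i∈N} min(v_i x_i, B_i) : x ∈ P(f) ∩ ℤ^N } equals the optimal value of max{ Σ_{i'∈N'} v_{i'} min(z_{i'}, B_{i'}/v_{i'}) : z ∈ P(f') ∩ ℤ^{N'} }, and if z* is optimal for the latter then x* with x*_i := z*_{i_a} + z*_{i_b}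 is optimal for the former. -/
open Finset

private lemma floorfacts (v B : ℝ) (hv : 0 < v) (hB : 0 < B) :
    0 ≤ ⌊B / v⌋ ∧ v * ((⌊B / v⌋ : ℤ) : ℝ) ≤ B ∧ B < v * (((⌊B / v⌋ : ℤ) : ℝ) + 1) := by
  have h1 : (0:ℝ) ≤ B / v := le_of_lt (div_pos hB hv)
  have h2 : ((⌊B / v⌋ : ℤ) : ℝ) ≤ B / v := Int.floor_le _
  have h3 : B / v < ((⌊B / v⌋ : ℤ) : ℝ) + 1 := Int.lt_floor_add_one _
  have hvB : v * (B / v) = B := by field_simp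
  refine ⟨Int.floor_nonneg.mpr h1, ?_, ?_⟩
  · calc v * ((⌊B / v⌋ : ℤ) : ℝ) ≤ v * (B / v) := mul_le_mul_of_nonneg_left h2 hv.le
      _ = B := hvB
  · calc B = v * (B / v) := hvB.symm
      _ < v * (((⌊B / v⌋ : ℤ) : ℝ) + 1) := mul_lt_mul_of_pos_left h3 hv

private lemma key_le (v B vb : ℝ) (hv : 0 < v) (hB : 0 < B)
    (hvb1 : 0 < B - v * ((⌊B / v⌋ : ℤ) : ℝ) → vb = B - v * ((⌊B / v⌋ : ℤ) : ℝ))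
    (hvb2 : B - v * ((⌊B / v⌋ : ℤ) : ℝ) = 0 → 0 < vb ∧ vb < v)
    (a b : ℤ) (ha : 0 ≤ a) (hb : 0 ≤ b) :
    v * min ((a : ℝ)) ((⌊B / v⌋ : ℤ) : ℝ)
      + vb * min ((b : ℝ)) (if 0 < B - v * ((⌊B / v⌋ : ℤ) : ℝ) then 1 else 0)
    ≤ min (v * ((a + b : ℤ) : ℝ)) B := by
  obtain ⟨hq0, hle, hlt⟩ := floorfacts v B hv hB
  set Q : ℝ := ((⌊B / v⌋ : ℤ) : ℝ) with hQ
  have haR : (0:ℝ) ≤ (a:ℝ) := by exact_mod_cast ha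
  have hbR : (0:ℝ) ≤ (b:ℝ) := by exact_mod_cast hb
  push_cast
  rcases lt_or_eq_of_le (sub_nonneg.mpr hle) with hr | hr
  · rw [if_pos hr, hvb1 hr]
    refine le_min ?_ ?_
    · nlinarith [min_le_left (a:ℝ) Q, min_le_left (b:ℝ) (1:ℝ),
        le_min hbR (zero_le_one (α := ℝ))]
    · nlinarith [min_le_right (a:ℝ) Q, min_le_right (b:ℝ) (1:ℝ),
        le_min hbR (zero_le_one (α := ℝ))]
  · rw [if_neg (by rw [← hr]; exact lt_irrefl 0), min_eq_right hbR, mul_zero, add_zero]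
    refine le_min ?_ ?_
    · nlinarith [min_le_left (a:ℝ) Q]
    · nlinarith [min_le_right (a:ℝ) Q]

private lemma key_eq (v B vb : ℝ) (hv : 0 < v) (hB : 0 < B)
    (hvb1 : 0 < B - v * ((⌊B / v⌋ : ℤ) : ℝ) → vb = B - v * ((⌊B / v⌋ : ℤ) : ℝ))
    (hvb2 : B - v * ((⌊B / v⌋ : ℤ) : ℝ) = 0 → 0 < vb ∧ vb < v)
    (x : ℤ) (hx : 0 ≤ x) :
    v * min (((min x ⌊B / v⌋ : ℤ) : ℝ)) ((⌊B / v⌋ : ℤ) : ℝ)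
      + vb * min (((x - min x ⌊B / v⌋ : ℤ) : ℝ))
          (if 0 < B - v * ((⌊B / v⌋ : ℤ) : ℝ) then 1 else 0)
    = min (v * (x : ℝ)) B := by
  obtain ⟨hq0, hle, hlt⟩ := floorfacts v B hv hB
  set q : ℤ := ⌊B / v⌋ with hq
  rcases le_or_gt x q with h | h
  · -- x ≤ q
    rw [min_eq_left h, sub_self]
    have hxQ : (x:ℝ) ≤ ((q:ℤ):ℝ) := by exact_mod_cast h
    rw [min_eq_left hxQ]
    have hz : min ((0:ℤ):ℝ) (if 0 < B - v * ((q:ℤ):ℝ) then 1 else 0) = 0 := by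
      split <;> simp
    rw [hz, mul_zero, add_zero]
    have : v * (x:ℝ) ≤ B := by nlinarith
    rw [min_eq_left this]
  · -- q < x
    rw [min_eq_right h.le]
    have hQQ : min ((q:ℤ):ℝ) ((q:ℤ):ℝ) = ((q:ℤ):ℝ) := min_self _
    rw [hQQ]
    have hx1 : (1:ℝ) ≤ ((x - q : ℤ) : ℝ) := by exact_mod_cast (by omega : (1:ℤ) ≤ x - q)
    have hxQ : ((q:ℤ):ℝ) + 1 ≤ (x:ℝ) := by push_cast; push_cast at hx1; linarith
    have hBlex : B ≤ v * (x:ℝ) := by nlinarith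
    rw [min_eq_right hBlex]
    rcases lt_or_eq_of_le (sub_nonneg.mpr hle) with hr | hr
    · rw [if_pos hr, min_eq_right hx1, hvb1 hr]; ring
    · rw [if_neg (by rw [← hr]; exact lt_irrefl 0)]
      have : min (((x - q : ℤ)):ℝ) (0:ℝ) = 0 := min_eq_right (by linarith)
      rw [this, mul_zero, add_zero]
      linarith

private lemma zq_feas {N : Type*} [DecidableEq N] (f : Finset N → ℤ)
    (x : N → ℤ) (hxP : ∀ S : Finset N, ∑ i ∈ S, x i ≤ f S)
    (zq : N × Bool → ℤ) (hzq0 : ∀ p, 0 ≤ zq p)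
    (hzqsum : ∀ i, zq (i, true) + zq (i, false) = x i) :
    ∀ S' : Finset (N × Bool), ∑ p ∈ S', zq p ≤ f (S'.image Prod.fst) := by
  intro S'
  have hsub : S' ⊆ (S'.image Prod.fst) ×ˢ (Finset.univ : Finset Bool) := by
    intro p hp
    simp only [Finset.mem_product, Finset.mem_univ, and_true]
    exact Finset.mem_image_of_mem _ hp
  calc ∑ p ∈ S', zq p
      ≤ ∑ p ∈ (S'.image Prod.fst) ×ˢ (Finset.univ : Finset Bool), zq p :=
        Finset.sum_le_sum_of_subset_of_nonneg hsub (fun p _ _ => hzq0 p)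
    _ = ∑ i ∈ S'.image Prod.fst, (zq (i, true) + zq (i, false)) := by
        rw [Finset.sum_product]
        exact Finset.sum_congr rfl (fun i _ => by rw [Fintype.sum_bool])
    _ = ∑ i ∈ S'.image Prod.fst, x i := Finset.sum_congr rfl (fun i _ => hzqsum i)
    _ ≤ f (S'.image Prod.fst) := hxP _

theorem stmt17 {N : Type*} [DecidableEq N] [Fintype N]
    (f : Finset N → ℤ)
    (hf0 : f ∅ = 0) (hfnn : ∀ S, 0 ≤ f S)
    (hmono : ∀ S T : Finset N, S ⊆ T → f S ≤ f T)
    (hsub : ∀ (S T : Finset N) (e : N), S ⊆ T → e ∉ T →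
      f (insert e T) - f T ≤ f (insert e S) - f S)
    (v B : N → ℝ) (hv : ∀ i, 0 < v i) (hB : ∀ i, 0 < B i)
    (vb : N → ℝ)
    (hvb1 : ∀ i, 0 < B i - v i * ((⌊B i / v i⌋ : ℤ) : ℝ) →
      vb i = B i - v i * ((⌊B i / v i⌋ : ℤ) : ℝ))
    (hvb2 : ∀ i, B i - v i * ((⌊B i / v i⌋ : ℤ) : ℝ) = 0 → 0 < vb i ∧ vb i < v i)
    (zstar : N × Bool → ℤ)
    (hz0 : ∀ i', 0 ≤ zstar i')
    (hzP : ∀ S' : Finset (N × Bool), ∑ i' ∈ S', zstar i' ≤ f (S'.image Prod.fst))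
    (hzopt : ∀ zq : N × Bool → ℤ, (∀ i', 0 ≤ zq i') →
      (∀ S' : Finset (N × Bool), ∑ i' ∈ S', zq i' ≤ f (S'.image Prod.fst)) →
      ∑ i : N, (v i * min ((zq (i, true) : ℝ)) ((⌊B i / v i⌋ : ℤ) : ℝ)
          + vb i * min ((zq (i, false) : ℝ))
              (if 0 < B i - v i * ((⌊B i / v i⌋ : ℤ) : ℝ) then 1 else 0))
        ≤ ∑ i : N, (v i * min ((zstar (i, true) : ℝ)) ((⌊B i / v i⌋ : ℤ) : ℝ)
          + vb i * min ((zstar (i, false) : ℝ))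
              (if 0 < B i - v i * ((⌊B i / v i⌋ : ℤ) : ℝ) then 1 else 0))) :
    (∀ i : N, 0 ≤ zstar (i, true) + zstar (i, false)) ∧
    (∀ S : Finset N, ∑ i ∈ S, (zstar (i, true) + zstar (i, false)) ≤ f S) ∧
    (∀ x : N → ℤ, (∀ i, 0 ≤ x i) → (∀ S : Finset N, ∑ i ∈ S, x i ≤ f S) →
      ∑ i : N, min (v i * ((x i : ℤ) : ℝ)) (B i)
        ≤ ∑ i : N, min (v i * ((zstar (i, true) + zstar (i, false) : ℤ) : ℝ)) (B i)) ∧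
    (∑ i : N, min (v i * ((zstar (i, true) + zstar (i, false) : ℤ) : ℝ)) (B i)
      = ∑ i : N, (v i * min ((zstar (i, true) : ℝ)) ((⌊B i / v i⌋ : ℤ) : ℝ)
          + vb i * min ((zstar (i, false) : ℝ))
              (if 0 < B i - v i * ((⌊B i / v i⌋ : ℤ) : ℝ) then 1 else 0))) := by
  -- Part 1
  have part1 : ∀ i : N, 0 ≤ zstar (i, true) + zstar (i, false) :=
    fun i => add_nonneg (hz0 _) (hz0 _)
  -- Part 2
  have part2 : ∀ S : Finset N, ∑ i ∈ S, (zstar (i, true) + zstar (i, false)) ≤ f S := by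
    intro S
    have himg : ((S ×ˢ (Finset.univ : Finset Bool)).image Prod.fst) = S := by
      ext a
      simp [Finset.mem_image, Finset.mem_product]
    have h := hzP (S ×ˢ (Finset.univ : Finset Bool))
    rw [himg, Finset.sum_product] at h
    calc ∑ i ∈ S, (zstar (i, true) + zstar (i, false))
        = ∑ i ∈ S, ∑ b : Bool, zstar (i, b) :=
          Finset.sum_congr rfl (fun i _ => by rw [Fintype.sum_bool])
      _ ≤ f S := h
  -- virtual objective ≤ real objective at zstar
  have hVle : ∑ i : N, (v i * min ((zstar (i, true) : ℝ)) ((⌊B i / v i⌋ : ℤ) : ℝ)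
          + vb i * min ((zstar (i, false) : ℝ))
              (if 0 < B i - v i * ((⌊B i / v i⌋ : ℤ) : ℝ) then 1 else 0))
      ≤ ∑ i : N, min (v i * ((zstar (i, true) + zstar (i, false) : ℤ) : ℝ)) (B i) :=
    Finset.sum_le_sum (fun i _ =>
      key_le (v i) (B i) (vb i) (hv i) (hB i) (hvb1 i) (hvb2 i)
        (zstar (i, true)) (zstar (i, false)) (hz0 _) (hz0 _))
  -- canonical split construction
  have construct : ∀ x : N → ℤ, (∀ i, 0 ≤ x i) → (∀ S : Finset N, ∑ i ∈ S, x i ≤ f S) →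
      ∑ i : N, min (v i * ((x i : ℤ) : ℝ)) (B i)
        ≤ ∑ i : N, (v i * min ((zstar (i, true) : ℝ)) ((⌊B i / v i⌋ : ℤ) : ℝ)
          + vb i * min ((zstar (i, false) : ℝ))
              (if 0 < B i - v i * ((⌊B i / v i⌋ : ℤ) : ℝ) then 1 else 0)) := by
    intro x hx0 hxP
    set zq : N × Bool → ℤ := fun p =>
      if p.2 then min (x p.1) ⌊B p.1 / v p.1⌋ else x p.1 - min (x p.1) ⌊B p.1 / v p.1⌋
      with hzqdef
    have hq0 : ∀ i, (0:ℤ) ≤ ⌊B i / v i⌋ :=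
      fun i => (floorfacts (v i) (B i) (hv i) (hB i)).1
    have hzq0 : ∀ p, 0 ≤ zq p := by
      rintro ⟨i, b⟩
      have h1 := hx0 i
      have h2 := hq0 i
      cases b <;> simp only [hzqdef] <;> simp <;> omega
    have hzqsum : ∀ i, zq (i, true) + zq (i, false) = x i := by
      intro i
      simp only [hzqdef]
      simp
    have hfeas := zq_feas f x hxP zq hzq0 hzqsum
    have hopt := hzopt zq hzq0 hfeas
    have heq : ∑ i : N, min (v i * ((x i : ℤ) : ℝ)) (B i)
        = ∑ i : N, (v i * min ((zq (i, true) : ℝ)) ((⌊B i / v i⌋ : ℤ) : ℝ)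
          + vb i * min ((zq (i, false) : ℝ))
              (if 0 < B i - v i * ((⌊B i / v i⌋ : ℤ) : ℝ) then 1 else 0)) := by
      refine Finset.sum_congr rfl (fun i _ => ?_)
      exact (key_eq (v i) (B i) (vb i) (hv i) (hB i) (hvb1 i) (hvb2 i) (x i) (hx0 i)).symm
    rw [heq]
    exact hopt
  -- Part 3
  have part3 : ∀ x : N → ℤ, (∀ i, 0 ≤ x i) → (∀ S : Finset N, ∑ i ∈ S, x i ≤ f S) →
      ∑ i : N, min (v i * ((x i : ℤ) : ℝ)) (B i)
        ≤ ∑ i : N, min (v i * ((zstar (i, true) + zstar (i, false) : ℤ) : ℝ)) (B i) :=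
    fun x hx0 hxP => le_trans (construct x hx0 hxP) hVle
  refine ⟨part1, part2, part3, ?_⟩
  -- Part 4
  refine le_antisymm ?_ hVle
  exact construct (fun i => zstar (i, true) + zstar (i, false)) part1 part2
end
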